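/- arXiv:1805.12236 — 7 statements merged into one kernel-verified Lean document; each statement's English description precedes it below -/
import Mathlib

section
/- Let S be a commutative ring, x ∈ S, R = S/(x), and (F̃, d̃) a lifting to free S-modules of a complex (F, d) of free R-modules. Then there exist S-linear maps ψ̃_i : F̃_i → F̃_{i-2} such that x·ψ̃_i = d̃_{i-1} ∘ d̃_i for all i. -/
/-! Since `d̃ ∘ d̃` vanishes mod `x`, its range lies in `x • F̃`, the range of multiplication by `x`;
each `F̃ᵢ` is projective, so `d̃ ∘ d̃` factors through multiplication by `x`. -/

theorem Module.exists_comp_eq_of_range_le {R P M N : Type*} [Ring R]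
    [AddCommGroup P] [Module R P] [AddCommGroup M] [Module R M] [AddCommGroup N] [Module R N]
    [Module.Projective R P] (f : M →ₗ[R] N) (g : P →ₗ[R] N)
    (hfg : LinearMap.range g ≤ LinearMap.range f) : ∃ h : P →ₗ[R] M, f ∘ₗ h = g := by
  obtain ⟨h, hh⟩ := Module.projective_lifting_property f.rangeRestrict
    (g.codRestrict _ fun v => hfg ⟨v, rfl⟩) f.surjective_rangeRestrict
  exact ⟨h, LinearMap.ext fun v => congr_arg Subtype.val (LinearMap.congr_fun hh v)⟩

theorem Submodule.mem_ideal_span_singleton_smul_top_iff {S M : Type*} [CommRing S]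
    [AddCommGroup M] [Module S M] (x : S) (m : M) :
    m ∈ (Ideal.span {x} • ⊤ : Submodule S M) ↔ ∃ n, x • n = m := by
  simp [Submodule.ideal_span_singleton_smul, Submodule.mem_smul_pointwise_iff_exists]

/-- Let `S` be a commutative ring, `x ∈ S`, `R = S/(x)`, and `(F̃, d̃)` a lifting to free
`S`-modules of a chain complex of free `R`-modules (the reduction of `d̃` mod `x` squares
to zero).  Then there exist `S`-linear maps `ψ̃ᵢ : F̃ᵢ → F̃_{i-2}` with
`x·ψ̃ᵢ = d̃_{i-1} ∘ d̃ᵢ` for all `i`. -/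
theorem exists_psi_lifting {S : Type*} [CommRing S] (x : S)
    (F : ℤ → Type*) [∀ i, AddCommGroup (F i)] [∀ i, Module S (F i)]
    [∀ i, Module.Free S (F i)]
    (d : ∀ i : ℤ, F (i + 1) →ₗ[S] F i)
    (hcomplex : ∀ (i : ℤ) (v : F (i + 1 + 1)),
      (Ideal.span {x} • ⊤ : Submodule S (F i)).mkQ (d i (d (i + 1) v)) = 0) :
    ∃ ψ : ∀ i : ℤ, F (i + 1 + 1) →ₗ[S] F i,
      ∀ (i : ℤ) (v : F (i + 1 + 1)), x • ψ i v = d i (d (i + 1) v) := by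
  have hrange : ∀ i, LinearMap.range (d i ∘ₗ d (i + 1)) ≤
      LinearMap.range (x • LinearMap.id : F i →ₗ[S] F i) := by
    rintro i _ ⟨v, rfl⟩
    have hv := hcomplex i v
    rwa [Submodule.mkQ_apply, Submodule.Quotient.mk_eq_zero,
      Submodule.mem_ideal_span_singleton_smul_top_iff] at hv
  choose ψ hψ using fun i => Module.exists_comp_eq_of_range_le _ _ (hrange i)
  exact ⟨ψ, fun i v => LinearMap.congr_fun (hψ i) v⟩
end

section
/- Let (x,y) be an exact pair of zero divisors in a commutative ring S, R = S/(x), (F̃, d̃) a lifting of a complex of free R-modules, and ψ̃ with x·ψ̃ = d̃². Then there exist S-linear maps φ̃_i : F̃_i → F̃_{i-3} such that d̃ψ̃ − ψ̃d̃ = y·φ̃. -/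
/-!
Multiplying `d̃ψ̃ − ψ̃d̃` by `x` gives `d̃³ − d̃³ = 0`. Since `ann(x) = (y)` and the target is free,
every value of `d̃ψ̃ − ψ̃d̃` is a multiple of `y`, and projectivity of the source lifts the map
through multiplication by `y`.
-/

/-- `(x, y)` is an exact pair of zero divisors in `S`:
`ann_S(x) = (y)` and `ann_S(y) = (x)`. -/
def IsExactZeroDivisorPair {S : Type*} [CommRing S] (x y : S) : Prop :=
  (Ideal.span {x} : Ideal S).annihilator = Ideal.span {y} ∧
    (Ideal.span {y} : Ideal S).annihilator = Ideal.span {x}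

section

variable {S M N : Type*} [CommRing S] [AddCommGroup M] [Module S M] [AddCommGroup N] [Module S N]

theorem Module.Free.exists_eq_smul_of_smul_eq_zero [Module.Free S M] {x y : S}
    (h : (Ideal.span {x}).annihilator ≤ Ideal.span {y}) {w : M} (hw : x • w = 0) :
    ∃ w' : M, w = y • w' := by
  classical
  let b := Module.Free.chooseBasis S M
  have hcoord (j) : y ∣ b.repr w j := by
    rw [← Ideal.mem_span_singleton]
    refine h ((Submodule.mem_annihilator_span_singleton x _).2 ?_)
    simpa [mul_comm] using congr(b.repr $hw j)
  choose a ha using hcoord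
  refine ⟨(b.repr w).sum fun j _ => a j • b j, ?_⟩
  conv_lhs => rw [← b.linearCombination_repr w, Finsupp.linearCombination_apply]
  simp only [Finsupp.sum, Finset.smul_sum, smul_smul, ha]

theorem LinearMap.exists_eq_smul_of_forall_exists_eq_smul [Module.Projective S M] (y : S)
    (f : M →ₗ[S] N) (hf : ∀ v, ∃ w, f v = y • w) : ∃ g : M →ₗ[S] N, f = y • g := by
  let yN := LinearMap.range (y • LinearMap.id : N →ₗ[S] N)
  obtain ⟨g, hg⟩ := Module.projective_lifting_property (y • LinearMap.id).rangeRestrict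
    (f.codRestrict yN fun v => (hf v).imp fun w hw => hw.symm)
    (LinearMap.surjective_rangeRestrict _)
  exact ⟨g, LinearMap.ext fun v => (congr_arg Subtype.val (LinearMap.congr_fun hg v)).symm⟩

theorem LinearMap.exists_eq_smul_of_smul_eq_zero [Module.Projective S M] [Module.Free S N]
    {x y : S} (h : (Ideal.span {x}).annihilator ≤ Ideal.span {y}) (f : M →ₗ[S] N)
    (hf : x • f = 0) : ∃ g : M →ₗ[S] N, f = y • g :=
  f.exists_eq_smul_of_forall_exists_eq_smul y fun v =>
    Module.Free.exists_eq_smul_of_smul_eq_zero h (LinearMap.congr_fun hf v)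

end

/-- Let `(x,y)` be an exact pair of zero divisors in `S`, `R = S/(x)`, `(F̃, d̃)` a lifting
of a complex of free `R`-modules, and `ψ̃` with `x·ψ̃ = d̃²`.  Then there exist `S`-linear
maps `φ̃ᵢ : F̃ᵢ → F̃_{i-3}` with `d̃ψ̃ − ψ̃d̃ = y·φ̃`. -/
theorem exists_phi_lifting {S : Type*} [CommRing S] {x y : S}
    (hxy : IsExactZeroDivisorPair x y)
    (F : ℤ → Type*) [∀ i, AddCommGroup (F i)] [∀ i, Module S (F i)]
    [∀ i, Module.Free S (F i)]
    (d : ∀ i : ℤ, F (i + 1) →ₗ[S] F i)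
    (ψ : ∀ i : ℤ, F (i + 1 + 1) →ₗ[S] F i)
    (hψ : ∀ (i : ℤ) (v : F (i + 1 + 1)), x • ψ i v = d i (d (i + 1) v)) :
    ∃ φ : ∀ i : ℤ, F (i + 1 + 1 + 1) →ₗ[S] F i,
      ∀ (i : ℤ) (v : F (i + 1 + 1 + 1)),
        d i (ψ (i + 1) v) - ψ i (d (i + 1 + 1) v) = y • φ i v := by
  have hx_annihilates (i : ℤ) : x • (d i ∘ₗ ψ (i + 1) - ψ i ∘ₗ d (i + 1 + 1)) = 0 := by
    ext v
    simp only [smul_sub, LinearMap.sub_apply, LinearMap.smul_apply, LinearMap.comp_apply,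
      ← map_smul, hψ, sub_self, LinearMap.zero_apply]
  choose φ hφ using fun i =>
    LinearMap.exists_eq_smul_of_smul_eq_zero hxy.1.le _ (hx_annihilates i)
  exact ⟨φ, fun i v => LinearMap.congr_fun (hφ i) v⟩
end

section
/- Let (x,y) be an exact pair of zero divisors in a commutative ring S, R = S/(x), F a complex of free R-modules with lifting (F̃, d̃), ψ̃ with x·ψ̃ = d̃², and z ∈ ann_R(ȳ). Then ψ_z := z·(ψ̃ ⊗_S R) is a chain map F → F of homological degree −2, i.e. d∘ψ_z = ψ_z∘d. -/
theorem Module.Flat.exists_eq_smul_of_smul_eq_zero {S M : Type*} [CommRing S] [AddCommGroup M]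
    [Module S M] [Module.Flat S M] {x y : S}
    (hann : (Ideal.span {x} : Ideal S).annihilator ≤ Ideal.span {y})
    {w : M} (hw : x • w = 0) : ∃ u : M, w = y • u := by
  obtain ⟨k, a, m, hwa, hxa⟩ := Module.Flat.isTrivialRelation_of_sum_smul_eq_zero
    (ι := Unit) (f := fun _ => x) (x := fun _ => w) (by simpa using hw)
  have hdvd : ∀ j, ∃ t, t * y = a () j := fun j =>
    Ideal.mem_span_singleton'.mp <| hann <|
      (Submodule.mem_annihilator_span_singleton x _).mpr <| by
        simpa [smul_eq_mul, mul_comm] using hxa j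
  choose t ht using hdvd
  refine ⟨∑ j, t j • m j, ?_⟩
  simp only [hwa (), ← ht, Finset.smul_sum, smul_smul, mul_comm y]

theorem smul_mem_span_smul_top_of_smul_eq_zero {S M : Type*} [CommRing S] [AddCommGroup M]
    [Module S M] [Module.Flat S M] {x y z : S}
    (hann : (Ideal.span {x} : Ideal S).annihilator ≤ Ideal.span {y})
    (hz : z * y ∈ (Ideal.span {x} : Ideal S)) {w : M} (hw : x • w = 0) :
    z • w ∈ (Ideal.span {x} • ⊤ : Submodule S M) := by
  obtain ⟨u, rfl⟩ := Module.Flat.exists_eq_smul_of_smul_eq_zero hann hw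
  obtain ⟨t, ht⟩ := Ideal.mem_span_singleton'.mp hz
  rw [smul_smul, ← ht, mul_comm, mul_smul]
  exact Submodule.smul_mem_smul (Ideal.mem_span_singleton_self x) trivial

theorem psi_z_is_chain_map_general {S : Type*} [CommRing S] {x y : S}
    (hxy : IsExactZeroDivisorPair x y)
    (F : ℤ → Type*) [∀ i, AddCommGroup (F i)] [∀ i, Module S (F i)]
    [∀ i, Module.Free S (F i)]
    (d : ∀ i : ℤ, F (i + 1) →ₗ[S] F i)
    (ψ : ∀ i : ℤ, F (i + 1 + 1) →ₗ[S] F i)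
    (hψ : ∀ (i : ℤ) (v : F (i + 1 + 1)), x • ψ i v = d i (d (i + 1) v))
    (z : S) (hz : z * y ∈ (Ideal.span {x} : Ideal S)) :
    ∀ (i : ℤ) (v : F (i + 1 + 1 + 1)),
      (Ideal.span {x} • ⊤ : Submodule S (F i)).mkQ (z • d i (ψ (i + 1) v)) =
        (Ideal.span {x} • ⊤ : Submodule S (F i)).mkQ (z • ψ i (d (i + 1 + 1) v)) := by
  intro i v
  have hcomm : x • (d i (ψ (i + 1) v) - ψ i (d (i + 1 + 1) v)) = 0 := by
    rw [smul_sub, hψ i, ← map_smul, hψ (i + 1), sub_self]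
  rw [← sub_eq_zero, ← map_sub, ← smul_sub, Submodule.mkQ_apply, Submodule.Quotient.mk_eq_zero]
  exact smul_mem_span_smul_top_of_smul_eq_zero hxy.1.le hz hcomm

/-- Let `(x,y)` be an exact pair of zero divisors in `S`, `R = S/(x)`, `F` a complex of free
`R`-modules with lifting `(F̃, d̃)` (the reduced complex being `F̃ᵢ/x·F̃ᵢ`), `ψ̃` with
`x·ψ̃ = d̃²`, and `z` a representative of an element of `ann_R(ȳ)` (i.e. `z·y ∈ (x)`).
Then `ψ_z := z·(ψ̃ ⊗_S R)` is a chain map of homological degree `−2` on the reduced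
complex: `d ∘ ψ_z = ψ_z ∘ d`. -/
theorem psi_z_is_chain_map {S : Type*} [CommRing S] {x y : S}
    (hxy : IsExactZeroDivisorPair x y)
    (F : ℤ → Type*) [∀ i, AddCommGroup (F i)] [∀ i, Module S (F i)]
    [∀ i, Module.Free S (F i)]
    (d : ∀ i : ℤ, F (i + 1) →ₗ[S] F i)
    (hcomplex : ∀ (i : ℤ) (v : F (i + 1 + 1)),
      (Ideal.span {x} • ⊤ : Submodule S (F i)).mkQ (d i (d (i + 1) v)) = 0)
    (ψ : ∀ i : ℤ, F (i + 1 + 1) →ₗ[S] F i)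
    (hψ : ∀ (i : ℤ) (v : F (i + 1 + 1)), x • ψ i v = d i (d (i + 1) v))
    (z : S) (hz : z * y ∈ (Ideal.span {x} : Ideal S)) :
    ∀ (i : ℤ) (v : F (i + 1 + 1 + 1)),
      (Ideal.span {x} • ⊤ : Submodule S (F i)).mkQ (z • d i (ψ (i + 1) v)) =
        (Ideal.span {x} • ⊤ : Submodule S (F i)).mkQ (z • ψ i (d (i + 1 + 1) v)) :=
  psi_z_is_chain_map_general hxy F d ψ hψ z hz
end

section
/- Let f: (F,d) → (G,d') be a degree-k morphism of complexes of finitely generated free R-modules, with degree −3 operators φ, φ' constructed from liftings as in the paper. Then φ'∘f is homotopic to (−1)^k f∘φ. -/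
theorem Module.Free.exists_smul_eq_of_smul_eq_zero {S N : Type*} [CommRing S] [AddCommGroup N]
    [Module S N] [Module.Free S N] {a b : S}
    (hab : (Ideal.span {a} : Ideal S).annihilator = Ideal.span {b}) {w : N} (hw : a • w = 0) :
    ∃ u : N, b • u = w := by
  obtain ⟨ι, B⟩ := Module.Free.exists_basis S N
  have hcoord (i : ι) : b ∣ B.repr w i := by
    rw [← Ideal.mem_span_singleton, ← hab, Submodule.mem_annihilator_span_singleton, smul_eq_mul,
      mul_comm]
    simpa using congr(B.repr $hw i)
  choose t ht using hcoord
  refine ⟨(B.repr w).sum fun i _ => t i • B i, ?_⟩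
  rw [Finsupp.smul_sum]
  simp only [smul_smul, ← ht]
  exact B.linearCombination_repr w

section LiftedOperators

variable {S : Type*} [CommRing S] {x y e : S}
  {F G : ℤ → Type*} [∀ i, AddCommGroup (F i)] [∀ i, Module S (F i)]
  [∀ i, AddCommGroup (G i)] [∀ i, Module S (G i)]
  {d : ∀ i : ℤ, F (i + 1) →ₗ[S] F i} {d' : ∀ i : ℤ, G (i + 1) →ₗ[S] G i}
  {ψ : ∀ i : ℤ, F (i + 1 + 1) →ₗ[S] F i} {ψ' : ∀ i : ℤ, G (i + 1 + 1) →ₗ[S] G i}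
  {f : ∀ i : ℤ, F i →ₗ[S] G i} {θ : ∀ i : ℤ, F (i + 1) →ₗ[S] G i}

theorem smul_psi_naturality_defect_eq_zero (he : e * e = 1)
    (hψ : ∀ (i : ℤ) (v : F (i + 1 + 1)), x • ψ i v = d i (d (i + 1) v))
    (hψ' : ∀ (i : ℤ) (v : G (i + 1 + 1)), x • ψ' i v = d' i (d' (i + 1) v))
    (hf : ∀ (i : ℤ) (v : F (i + 1)), d' i (f (i + 1) v) - e • f i (d i v) = x • θ i v)
    (i : ℤ) :
    x • (ψ' i ∘ₗ f (i + 1 + 1) - f i ∘ₗ ψ i - d' i ∘ₗ θ (i + 1) - e • (θ i ∘ₗ d (i + 1))) = 0 := by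
  ext v
  have hfψ : x • f i (ψ i v) = f i (d i (d (i + 1) v)) := by rw [← map_smul, hψ]
  have hd'f : d' i (d' (i + 1) (f (i + 1 + 1) v)) - e • d' i (f (i + 1) (d (i + 1) v)) =
      x • d' i (θ (i + 1) v) := by
    rw [← map_smul, ← map_sub, hf, map_smul]
  simp only [LinearMap.smul_apply, LinearMap.sub_apply, LinearMap.comp_apply, LinearMap.zero_apply]
  linear_combination (norm := module) hψ' i (f (i + 1 + 1) v) - hfψ + hd'f
    + e • hf i (d (i + 1) v) + he • f i (d i (d (i + 1) v))

theorem smul_phi_naturality_defect_eq_zero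
    {φ : ∀ i : ℤ, F (i + 1 + 1 + 1) →ₗ[S] F i} {φ' : ∀ i : ℤ, G (i + 1 + 1 + 1) →ₗ[S] G i}
    {τ : ∀ i : ℤ, F (i + 1 + 1) →ₗ[S] G i} (he : e * e = 1)
    (hψ : ∀ (i : ℤ) (v : F (i + 1 + 1)), x • ψ i v = d i (d (i + 1) v))
    (hψ' : ∀ (i : ℤ) (v : G (i + 1 + 1)), x • ψ' i v = d' i (d' (i + 1) v))
    (hφ : ∀ (i : ℤ) (v : F (i + 1 + 1 + 1)),
      d i (ψ (i + 1) v) - ψ i (d (i + 1 + 1) v) = y • φ i v)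
    (hφ' : ∀ (i : ℤ) (v : G (i + 1 + 1 + 1)),
      d' i (ψ' (i + 1) v) - ψ' i (d' (i + 1 + 1) v) = y • φ' i v)
    (hf : ∀ (i : ℤ) (v : F (i + 1)), d' i (f (i + 1) v) - e • f i (d i v) = x • θ i v)
    (hτ : ∀ i : ℤ, y • τ i =
      ψ' i ∘ₗ f (i + 1 + 1) - f i ∘ₗ ψ i - d' i ∘ₗ θ (i + 1) - e • (θ i ∘ₗ d (i + 1)))
    (i : ℤ) :
    y • (φ' i ∘ₗ f (i + 1 + 1 + 1) - e • (f i ∘ₗ φ i)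
      - (d' i ∘ₗ τ (i + 1) - e • (τ i ∘ₗ d (i + 1 + 1)))) = 0 := by
  ext v
  have hfφ : y • f i (φ i v) = f i (d i (ψ (i + 1) v)) - f i (ψ i (d (i + 1 + 1) v)) := by
    rw [← map_smul, ← hφ, map_sub]
  have hd'τ : y • d' i (τ (i + 1) v) = d' i (ψ' (i + 1) (f (i + 1 + 1 + 1) v))
      - d' i (f (i + 1) (ψ (i + 1) v)) - d' i (d' (i + 1) (θ (i + 1 + 1) v))
      - e • d' i (θ (i + 1) (d (i + 1 + 1) v)) := by
    simpa using congr(d' i ($(hτ (i + 1)) v))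
  have hτd : y • τ i (d (i + 1 + 1) v) = ψ' i (f (i + 1 + 1) (d (i + 1 + 1) v))
      - f i (ψ i (d (i + 1 + 1) v)) - d' i (θ (i + 1) (d (i + 1 + 1) v))
      - e • θ i (d (i + 1) (d (i + 1 + 1) v)) := by
    simpa using congr($(hτ i) (d (i + 1 + 1) v))
  have hψ'f : ψ' i (d' (i + 1 + 1) (f (i + 1 + 1 + 1) v))
      - e • ψ' i (f (i + 1 + 1) (d (i + 1 + 1) v)) = x • ψ' i (θ (i + 1 + 1) v) := by
    rw [← map_smul, ← map_sub, hf, map_smul]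
  have hθψ : x • θ i (ψ (i + 1) v) = θ i (d (i + 1) (d (i + 1 + 1) v)) := by
    rw [← map_smul, hψ]
  simp only [LinearMap.smul_apply, LinearMap.sub_apply, LinearMap.comp_apply, LinearMap.zero_apply]
  linear_combination (norm := module) -hφ' i (f (i + 1 + 1 + 1) v) - e • hfφ - hd'τ + e • hτd
    - hψ'f - hψ' i (θ (i + 1 + 1) v) + hf i (ψ (i + 1) v) + hθψ
    - he • θ i (d (i + 1) (d (i + 1 + 1) v))

end LiftedOperators

theorem Submodule.mkQ_eq_of_sub_eq_smul {S N : Type*} [CommRing S] [AddCommGroup N] [Module S N]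
    {x : S} {a b m : N} (h : a - b = x • m) :
    (Ideal.span {x} • ⊤ : Submodule S N).mkQ a = (Ideal.span {x} • ⊤ : Submodule S N).mkQ b := by
  rw [mkQ_apply, mkQ_apply, Quotient.eq, h]
  exact smul_mem_smul (Ideal.mem_span_singleton_self x) mem_top

/-- `G` is indexed after the shift by `k`, so `f` has components of degree `0` and `θ` witnesses
the chain-map condition `d'f = (−1)^k f d` modulo `x`. -/
theorem phi_natural_general {S : Type*} [CommRing S] {x y : S}
    (hxy : IsExactZeroDivisorPair x y)
    (F : ℤ → Type*) [∀ i, AddCommGroup (F i)] [∀ i, Module S (F i)]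
    [∀ i, Module.Free S (F i)] [∀ i, Module.Finite S (F i)]
    (G : ℤ → Type*) [∀ i, AddCommGroup (G i)] [∀ i, Module S (G i)]
    [∀ i, Module.Free S (G i)]
    (d : ∀ i : ℤ, F (i + 1) →ₗ[S] F i) (d' : ∀ i : ℤ, G (i + 1) →ₗ[S] G i)
    (ψ : ∀ i : ℤ, F (i + 1 + 1) →ₗ[S] F i) (ψ' : ∀ i : ℤ, G (i + 1 + 1) →ₗ[S] G i)
    (hψ : ∀ (i : ℤ) (v : F (i + 1 + 1)), x • ψ i v = d i (d (i + 1) v))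
    (hψ' : ∀ (i : ℤ) (v : G (i + 1 + 1)), x • ψ' i v = d' i (d' (i + 1) v))
    (φ : ∀ i : ℤ, F (i + 1 + 1 + 1) →ₗ[S] F i)
    (φ' : ∀ i : ℤ, G (i + 1 + 1 + 1) →ₗ[S] G i)
    (hφ : ∀ (i : ℤ) (v : F (i + 1 + 1 + 1)),
      d i (ψ (i + 1) v) - ψ i (d (i + 1 + 1) v) = y • φ i v)
    (hφ' : ∀ (i : ℤ) (v : G (i + 1 + 1 + 1)),
      d' i (ψ' (i + 1) v) - ψ' i (d' (i + 1 + 1) v) = y • φ' i v)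
    (k : ℤ) (f : ∀ i : ℤ, F i →ₗ[S] G i)
    (θ : ∀ i : ℤ, F (i + 1) →ₗ[S] G i)
    (hf : ∀ (i : ℤ) (v : F (i + 1)),
      d' i (f (i + 1) v) - (((-1 : ℤˣ) ^ k : ℤˣ) : ℤ) • f i (d i v) = x • θ i v) :
    ∃ σ : ∀ i : ℤ, F (i + 1 + 1) →ₗ[S] G i,
      ∀ (i : ℤ) (v : F (i + 1 + 1 + 1)),
        (Ideal.span {x} • ⊤ : Submodule S (G i)).mkQ
            (φ' i (f (i + 1 + 1 + 1) v) - (((-1 : ℤˣ) ^ k : ℤˣ) : ℤ) • f i (φ i v)) =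
          (Ideal.span {x} • ⊤ : Submodule S (G i)).mkQ
            (d' i (σ (i + 1) v) -
              (((-1 : ℤˣ) ^ k : ℤˣ) : ℤ) • σ i (d (i + 1 + 1) v)) := by
  have he : ((((-1 : ℤˣ) ^ k : ℤˣ) : ℤ) : S) * (((-1 : ℤˣ) ^ k : ℤˣ) : ℤ) = 1 := by
    rw [← Int.cast_mul, ← Units.val_mul, Int.units_mul_self, Units.val_one, Int.cast_one]
  simp only [← Int.cast_smul_eq_zsmul S] at hf ⊢
  choose τ hτ using fun i ↦ Module.Free.exists_smul_eq_of_smul_eq_zero hxy.1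
    (smul_psi_naturality_defect_eq_zero he hψ hψ' hf i)
  choose μ hμ using fun i ↦ Module.Free.exists_smul_eq_of_smul_eq_zero hxy.2
    (smul_phi_naturality_defect_eq_zero he hψ hψ' hφ hφ' hf hτ i)
  exact ⟨τ, fun i v ↦ Submodule.mkQ_eq_of_sub_eq_smul congr($(hμ i) v).symm⟩

/-- Naturality of the degree `−3` operators.  Let `f : F → G` be a degree-`k` morphism of
complexes of finitely generated free `R = S/(x)`-modules (here `G` is indexed after shifting
by `k`, so that `f` has degree `0` components and the chain-map condition carries the sign
`(−1)^k`; a lift `f̃` satisfies `d̃'f̃ − (−1)^k f̃ d̃ = x·θ̃`).  With `ψ̃, ψ̃'` satisfying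
`x·ψ̃ = d̃²`, `x·ψ̃' = (d̃')²` and `φ̃, φ̃'` satisfying `d̃ψ̃ − ψ̃d̃ = y·φ̃`,
`d̃'ψ̃' − ψ̃'d̃' = y·φ̃'`, the map `φ'∘f − (−1)^k f∘φ` on the reduced complexes is
null-homotopic. -/
theorem phi_natural {S : Type*} [CommRing S] {x y : S}
    (hxy : IsExactZeroDivisorPair x y)
    (F : ℤ → Type*) [∀ i, AddCommGroup (F i)] [∀ i, Module S (F i)]
    [∀ i, Module.Free S (F i)] [∀ i, Module.Finite S (F i)]
    (G : ℤ → Type*) [∀ i, AddCommGroup (G i)] [∀ i, Module S (G i)]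
    [∀ i, Module.Free S (G i)] [∀ i, Module.Finite S (G i)]
    (d : ∀ i : ℤ, F (i + 1) →ₗ[S] F i) (d' : ∀ i : ℤ, G (i + 1) →ₗ[S] G i)
    (hcomplexF : ∀ (i : ℤ) (v : F (i + 1 + 1)),
      (Ideal.span {x} • ⊤ : Submodule S (F i)).mkQ (d i (d (i + 1) v)) = 0)
    (hcomplexG : ∀ (i : ℤ) (v : G (i + 1 + 1)),
      (Ideal.span {x} • ⊤ : Submodule S (G i)).mkQ (d' i (d' (i + 1) v)) = 0)
    (ψ : ∀ i : ℤ, F (i + 1 + 1) →ₗ[S] F i) (ψ' : ∀ i : ℤ, G (i + 1 + 1) →ₗ[S] G i)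
    (hψ : ∀ (i : ℤ) (v : F (i + 1 + 1)), x • ψ i v = d i (d (i + 1) v))
    (hψ' : ∀ (i : ℤ) (v : G (i + 1 + 1)), x • ψ' i v = d' i (d' (i + 1) v))
    (φ : ∀ i : ℤ, F (i + 1 + 1 + 1) →ₗ[S] F i)
    (φ' : ∀ i : ℤ, G (i + 1 + 1 + 1) →ₗ[S] G i)
    (hφ : ∀ (i : ℤ) (v : F (i + 1 + 1 + 1)),
      d i (ψ (i + 1) v) - ψ i (d (i + 1 + 1) v) = y • φ i v)
    (hφ' : ∀ (i : ℤ) (v : G (i + 1 + 1 + 1)),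
      d' i (ψ' (i + 1) v) - ψ' i (d' (i + 1 + 1) v) = y • φ' i v)
    (k : ℤ) (f : ∀ i : ℤ, F i →ₗ[S] G i)
    (θ : ∀ i : ℤ, F (i + 1) →ₗ[S] G i)
    (hf : ∀ (i : ℤ) (v : F (i + 1)),
      d' i (f (i + 1) v) - (((-1 : ℤˣ) ^ k : ℤˣ) : ℤ) • f i (d i v) = x • θ i v) :
    ∃ σ : ∀ i : ℤ, F (i + 1 + 1) →ₗ[S] G i,
      ∀ (i : ℤ) (v : F (i + 1 + 1 + 1)),
        (Ideal.span {x} • ⊤ : Submodule S (G i)).mkQ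
            (φ' i (f (i + 1 + 1 + 1) v) - (((-1 : ℤˣ) ^ k : ℤˣ) : ℤ) • f i (φ i v)) =
          (Ideal.span {x} • ⊤ : Submodule S (G i)).mkQ
            (d' i (σ (i + 1) v) -
              (((-1 : ℤˣ) ^ k : ℤˣ) : ℤ) • σ i (d (i + 1 + 1) v)) :=
  phi_natural_general hxy F G d d' ψ ψ' hψ hψ' φ φ' hφ hφ' k f θ hf
end

section
/- The operators ψ_z and φ constructed from a complex of free R-modules are independent, up to chain homotopy, of the choice of lifting (F̃, d̃) and of the choices of ψ̃ and φ̃. -/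
/-!
Since `d ≡ d'` mod `x` and the `F i` are free, `d' = d - x e` for some `e`. Then
`x ψ' = d' d' = x (ψ - d e - e d + x e e)`, so `ψ - ψ' - (d e + e d) + x e e` is killed by `x`;
as `ann(x) = (y)` and the `F i` are free, it equals `y γ` for some `γ`. Multiplying by `z`, where
`z y ∈ (x)`, shows that `z e` is a homotopy from `ψ_z` to `ψ'_z` mod `x`. Expanding,
`y (φ - φ' - (d γ - γ d)) = x y (γ e - e γ) = 0`, and `ann(y) = (x)` makes `γ` a homotopy
from `φ` to `φ'` mod `x`.
-/

open Submodule

section Divisibility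

variable {S : Type*} [CommRing S] {M N : Type*} [AddCommGroup M] [Module S M]
  [AddCommGroup N] [Module S N]

theorem mem_span_singleton_smul_top_iff {x : S} {m : M} :
    m ∈ (Ideal.span {x} • ⊤ : Submodule S M) ↔ ∃ n, x • n = m := by
  simp [ideal_span_singleton_smul, mem_smul_pointwise_iff_exists]

theorem exists_smul_eq_of_smul_eq_zero [Module.Free S M] {a b : S}
    (hab : (Ideal.span {a}).annihilator ≤ Ideal.span {b}) {n : M} (hn : a • n = 0) :
    ∃ m : M, b • m = n := by
  let B := Module.Free.chooseBasis S M
  have hcoord : ∀ j, ∃ s, s * b = B.repr n j := fun j => by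
    refine Ideal.mem_span_singleton'.mp (hab ((mem_annihilator_span_singleton a _).mpr ?_))
    simpa [mul_comm] using congrArg (B.repr · j) hn
  choose s hs using hcoord
  refine ⟨∑ j ∈ (B.repr n).support, s j • B j, ?_⟩
  simp only [Finset.smul_sum, smul_smul, mul_comm b, hs]
  exact B.linearCombination_repr n

theorem exists_linearMap_smul_eq [Module.Projective S M] (a : S) (f : M →ₗ[S] N)
    (hf : ∀ v, ∃ m, a • m = f v) : ∃ g : M →ₗ[S] N, ∀ v, a • g v = f v := by
  let μ : N →ₗ[S] N := a • LinearMap.id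
  obtain ⟨g, hg⟩ := Module.projective_lifting_property μ.rangeRestrict
    (f.codRestrict μ.range hf) μ.surjective_rangeRestrict
  exact ⟨g, fun v => congrArg Subtype.val (LinearMap.congr_fun hg v)⟩

theorem exists_eq_sub_smul_of_mkQ_eq [Module.Projective S M] {x : S} (f g : M →ₗ[S] N)
    (hfg : ∀ v, (Ideal.span {x} • ⊤ : Submodule S N).mkQ (f v) =
      (Ideal.span {x} • ⊤ : Submodule S N).mkQ (g v)) :
    ∃ e : M →ₗ[S] N, ∀ v, g v = f v - x • e v := by
  obtain ⟨e, he⟩ := exists_linearMap_smul_eq x (f - g) fun v =>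
    mem_span_singleton_smul_top_iff.mp ((Submodule.Quotient.eq _).mp (hfg v))
  exact ⟨e, fun v => by rw [he]; simp⟩

end Divisibility

section Homotopy

variable {S : Type*} [CommRing S] {x y : S} {F : ℤ → Type*} [∀ i, AddCommGroup (F i)]
  [∀ i, Module S (F i)] {d d' e : ∀ i : ℤ, F (i + 1) →ₗ[S] F i}
  {ψ ψ' γ : ∀ i : ℤ, F (i + 1 + 1) →ₗ[S] F i}

theorem smul_psi'_eq (he : ∀ i v, d' i v = d i v - x • e i v)
    (hψ : ∀ i v, x • ψ i v = d i (d (i + 1) v)) (hψ' : ∀ i v, x • ψ' i v = d' i (d' (i + 1) v))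
    (i : ℤ) (v : F (i + 1 + 1)) :
    x • ψ' i v =
      x • (ψ i v - d i (e (i + 1) v) - e i (d (i + 1) v) + x • e i (e (i + 1) v)) := by
  rw [hψ', he, he]
  simp only [map_sub, map_smul]
  rw [← hψ]
  module

theorem exists_psi'_eq_sub_smul [∀ i, Module.Free S (F i)]
    (hx : (Ideal.span {x}).annihilator ≤ Ideal.span {y})
    (he : ∀ i v, d' i v = d i v - x • e i v)
    (hψ : ∀ i v, x • ψ i v = d i (d (i + 1) v)) (hψ' : ∀ i v, x • ψ' i v = d' i (d' (i + 1) v))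
    (i : ℤ) : ∃ γ : F (i + 1 + 1) →ₗ[S] F i, ∀ v, ψ' i v =
      ψ i v - d i (e (i + 1) v) - e i (d (i + 1) v) + x • e i (e (i + 1) v) - y • γ v := by
  obtain ⟨γ, hγ⟩ := exists_linearMap_smul_eq y
    (ψ i - ψ' i - d i ∘ₗ e (i + 1) - e i ∘ₗ d (i + 1) + x • e i ∘ₗ e (i + 1)) fun v => by
      refine exists_smul_eq_of_smul_eq_zero hx ?_
      simp only [LinearMap.add_apply, LinearMap.sub_apply, LinearMap.smul_apply,
        LinearMap.comp_apply]
      linear_combination (norm := module) -smul_psi'_eq he hψ hψ' i v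
  refine ⟨γ, fun v => ?_⟩
  rw [hγ]
  simp only [LinearMap.add_apply, LinearMap.sub_apply, LinearMap.smul_apply,
    LinearMap.comp_apply]
  abel

theorem mkQ_smul_psi_sub_smul_psi'_eq {z : S} (hz : z * y ∈ Ideal.span {x})
    (hγ : ∀ i v, ψ' i v =
      ψ i v - d i (e (i + 1) v) - e i (d (i + 1) v) + x • e i (e (i + 1) v) - y • γ i v)
    (i : ℤ) (v : F (i + 1 + 1)) :
    (Ideal.span {x} • ⊤ : Submodule S (F i)).mkQ (z • ψ i v - z • ψ' i v) =
      (Ideal.span {x} • ⊤ : Submodule S (F i)).mkQ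
        (d i (z • e (i + 1) v) + z • e i (d (i + 1) v)) := by
  rw [mkQ_apply, mkQ_apply, Submodule.Quotient.eq]
  have key : z • ψ i v - z • ψ' i v - (d i (z • e (i + 1) v) + z • e i (d (i + 1) v)) =
      (z * y) • γ i v - x • z • e i (e (i + 1) v) := by
    rw [hγ, map_smul]
    module
  rw [key]
  exact sub_mem (smul_mem_smul hz mem_top)
    (smul_mem_smul (Ideal.mem_span_singleton_self x) mem_top)

theorem smul_phi_sub_phi'_sub_homotopy_eq_zero (hxy : x * y = 0)
    (he : ∀ i v, d' i v = d i v - x • e i v) (hψ : ∀ i v, x • ψ i v = d i (d (i + 1) v))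
    (hγ : ∀ i v, ψ' i v =
      ψ i v - d i (e (i + 1) v) - e i (d (i + 1) v) + x • e i (e (i + 1) v) - y • γ i v)
    {φ φ' : ∀ i : ℤ, F (i + 1 + 1 + 1) →ₗ[S] F i}
    (hφ : ∀ i v, d i (ψ (i + 1) v) - ψ i (d (i + 1 + 1) v) = y • φ i v)
    (hφ' : ∀ i v, d' i (ψ' (i + 1) v) - ψ' i (d' (i + 1 + 1) v) = y • φ' i v)
    (i : ℤ) (v : F (i + 1 + 1 + 1)) :
    y • (φ i v - φ' i v - (d i (γ (i + 1) v) - γ i (d (i + 1 + 1) v))) = 0 := by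
  have hyγ : ∀ j w, y • γ j w =
      ψ j w - ψ' j w - d j (e (j + 1) w) - e j (d (j + 1) w) + x • e j (e (j + 1) w) := by
    intro j w; rw [hγ]; abel
  calc y • (φ i v - φ' i v - (d i (γ (i + 1) v) - γ i (d (i + 1 + 1) v)))
      = x • (e i (ψ' (i + 1) v) - ψ' i (e (i + 1 + 1) v))
          + (d i (d (i + 1) (e (i + 1 + 1) v)) - e i (d (i + 1) (d (i + 1 + 1) v)))
          - x • (d i (e (i + 1) (e (i + 1 + 1) v)) - e i (e (i + 1) (d (i + 1 + 1) v))) := by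
        rw [smul_sub, smul_sub, smul_sub, ← hφ, ← hφ', ← map_smul (d i), hyγ, hyγ, he, he]
        simp only [map_sub, map_add, map_smul]
        module
    _ = x • (e i (ψ' (i + 1) v) - ψ' i (e (i + 1 + 1) v) + ψ i (e (i + 1 + 1) v)
          - e i (ψ (i + 1) v) - d i (e (i + 1) (e (i + 1 + 1) v))
          + e i (e (i + 1) (d (i + 1 + 1) v))) := by
        rw [← hψ, ← hψ, map_smul]
        module
    _ = x • (y • γ i (e (i + 1 + 1) v) - y • e i (γ (i + 1) v)) := by
        rw [hγ, hγ]
        simp only [map_sub, map_add, map_smul]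
        module
    _ = 0 := by rw [smul_sub, smul_smul, smul_smul, hxy, zero_smul, zero_smul, sub_zero]

end Homotopy

theorem operators_independent_of_choices_general {S : Type*} [CommRing S] {x y : S}
    (hxy : IsExactZeroDivisorPair x y)
    (F : ℤ → Type*) [∀ i, AddCommGroup (F i)] [∀ i, Module S (F i)]
    [∀ i, Module.Free S (F i)]
    (d d' : ∀ i : ℤ, F (i + 1) →ₗ[S] F i)
    (hdd' : ∀ (i : ℤ) (v : F (i + 1)),
      (Ideal.span {x} • ⊤ : Submodule S (F i)).mkQ (d i v) =
        (Ideal.span {x} • ⊤ : Submodule S (F i)).mkQ (d' i v))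
    (ψ ψ' : ∀ i : ℤ, F (i + 1 + 1) →ₗ[S] F i)
    (hψ : ∀ (i : ℤ) (v : F (i + 1 + 1)), x • ψ i v = d i (d (i + 1) v))
    (hψ' : ∀ (i : ℤ) (v : F (i + 1 + 1)), x • ψ' i v = d' i (d' (i + 1) v))
    (φ φ' : ∀ i : ℤ, F (i + 1 + 1 + 1) →ₗ[S] F i)
    (hφ : ∀ (i : ℤ) (v : F (i + 1 + 1 + 1)),
      d i (ψ (i + 1) v) - ψ i (d (i + 1 + 1) v) = y • φ i v)
    (hφ' : ∀ (i : ℤ) (v : F (i + 1 + 1 + 1)),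
      d' i (ψ' (i + 1) v) - ψ' i (d' (i + 1 + 1) v) = y • φ' i v)
    (z : S) (hz : z * y ∈ (Ideal.span {x} : Ideal S)) :
    (∃ τ : ∀ i : ℤ, F (i + 1) →ₗ[S] F i,
      ∀ (i : ℤ) (v : F (i + 1 + 1)),
        (Ideal.span {x} • ⊤ : Submodule S (F i)).mkQ (z • ψ i v - z • ψ' i v) =
          (Ideal.span {x} • ⊤ : Submodule S (F i)).mkQ
            (d i (τ (i + 1) v) + τ i (d (i + 1) v))) ∧
    (∃ σ : ∀ i : ℤ, F (i + 1 + 1) →ₗ[S] F i,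
      ∀ (i : ℤ) (v : F (i + 1 + 1 + 1)),
        (Ideal.span {x} • ⊤ : Submodule S (F i)).mkQ (φ i v - φ' i v) =
          (Ideal.span {x} • ⊤ : Submodule S (F i)).mkQ
            (d i (σ (i + 1) v) - σ i (d (i + 1 + 1) v))) := by
  obtain ⟨hx, hy⟩ := hxy
  have hxy0 : x * y = 0 := by
    rw [mul_comm, ← smul_eq_mul]
    exact (mem_annihilator_span_singleton x y).mp (hx ▸ Ideal.mem_span_singleton_self y)
  choose e he using fun i => exists_eq_sub_smul_of_mkQ_eq (d i) (d' i) (hdd' i)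
  choose γ hγ using exists_psi'_eq_sub_smul hx.le he hψ hψ'
  refine ⟨⟨fun i => z • e i, mkQ_smul_psi_sub_smul_psi'_eq hz hγ⟩, ⟨γ, fun i v => ?_⟩⟩
  rw [mkQ_apply, mkQ_apply, Submodule.Quotient.eq, mem_span_singleton_smul_top_iff]
  exact exists_smul_eq_of_smul_eq_zero hy.le
    (smul_phi_sub_phi'_sub_homotopy_eq_zero hxy0 he hψ hγ hφ hφ' i v)

/-- Independence of choices.  Given two liftings `d, d'` (over the same free `S`-modules)
of the differential of one complex of free `R = S/(x)`-modules (i.e. `d ≡ d'` mod `x`),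
together with choices `ψ, ψ'` satisfying `x·ψ = d²`, `x·ψ' = (d')²`, and `φ, φ'` satisfying
`dψ − ψd = y·φ`, `d'ψ' − ψ'd' = y·φ'`, the resulting operators `ψ_z, ψ'_z` (for any
representative `z` of an element of `ann_R(ȳ)`) and `φ, φ'` on the reduced complex are
chain homotopic. -/
theorem operators_independent_of_choices {S : Type*} [CommRing S] {x y : S}
    (hxy : IsExactZeroDivisorPair x y)
    (F : ℤ → Type*) [∀ i, AddCommGroup (F i)] [∀ i, Module S (F i)]
    [∀ i, Module.Free S (F i)]
    (d d' : ∀ i : ℤ, F (i + 1) →ₗ[S] F i)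
    (hcomplex : ∀ (i : ℤ) (v : F (i + 1 + 1)),
      (Ideal.span {x} • ⊤ : Submodule S (F i)).mkQ (d i (d (i + 1) v)) = 0)
    (hdd' : ∀ (i : ℤ) (v : F (i + 1)),
      (Ideal.span {x} • ⊤ : Submodule S (F i)).mkQ (d i v) =
        (Ideal.span {x} • ⊤ : Submodule S (F i)).mkQ (d' i v))
    (ψ ψ' : ∀ i : ℤ, F (i + 1 + 1) →ₗ[S] F i)
    (hψ : ∀ (i : ℤ) (v : F (i + 1 + 1)), x • ψ i v = d i (d (i + 1) v))
    (hψ' : ∀ (i : ℤ) (v : F (i + 1 + 1)), x • ψ' i v = d' i (d' (i + 1) v))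
    (φ φ' : ∀ i : ℤ, F (i + 1 + 1 + 1) →ₗ[S] F i)
    (hφ : ∀ (i : ℤ) (v : F (i + 1 + 1 + 1)),
      d i (ψ (i + 1) v) - ψ i (d (i + 1 + 1) v) = y • φ i v)
    (hφ' : ∀ (i : ℤ) (v : F (i + 1 + 1 + 1)),
      d' i (ψ' (i + 1) v) - ψ' i (d' (i + 1 + 1) v) = y • φ' i v)
    (z : S) (hz : z * y ∈ (Ideal.span {x} : Ideal S)) :
    (∃ τ : ∀ i : ℤ, F (i + 1) →ₗ[S] F i,
      ∀ (i : ℤ) (v : F (i + 1 + 1)),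
        (Ideal.span {x} • ⊤ : Submodule S (F i)).mkQ (z • ψ i v - z • ψ' i v) =
          (Ideal.span {x} • ⊤ : Submodule S (F i)).mkQ
            (d i (τ (i + 1) v) + τ i (d (i + 1) v))) ∧
    (∃ σ : ∀ i : ℤ, F (i + 1 + 1) →ₗ[S] F i,
      ∀ (i : ℤ) (v : F (i + 1 + 1 + 1)),
        (Ideal.span {x} • ⊤ : Submodule S (F i)).mkQ (φ i v - φ' i v) =
          (Ideal.span {x} • ⊤ : Submodule S (F i)).mkQ
            (d i (σ (i + 1) v) - σ i (d (i + 1 + 1) v))) :=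
  operators_independent_of_choices_general hxy F d d' hdd' ψ ψ' hψ hψ' φ φ' hφ hφ' z hz
end

section
/- In the setting of the construction, the degree −3 operator φ satisfies: 2φ² is null-homotopic on the complex F. -/
/-!
Over `S` we have `d² = xψ` and `dψ - ψd = yφ`. Let `f` be an odd map with `df + fd = xg`. Then `x`
kills `(ψf - fψ) - (dg - gd)`, so by exactness of `(x, y)` on free modules it equals `yσ`, and a
direct computation gives `y (φf + fφ - dσ - σd) = 0`; exactness again puts `φf + fφ - dσ - σd` in
`xF`. Since `y (dφ + φd) = d²ψ - ψd² = x (ψψ - ψψ) = 0`, `φ` itself is such an `f`, and `f = φ`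
gives `2φ² ≃ 0`.
-/

namespace IsExactZeroDivisorPair

variable {S : Type*} [CommRing S] {x y : S}

theorem symm (h : IsExactZeroDivisorPair x y) : IsExactZeroDivisorPair y x :=
  ⟨h.2, h.1⟩

theorem dvd_of_mul_eq_zero (h : IsExactZeroDivisorPair x y) {s : S} (hs : y * s = 0) : x ∣ s := by
  rw [← Ideal.mem_span_singleton, ← h.2, Ideal.span, Submodule.mem_annihilator_span_singleton,
    smul_eq_mul, mul_comm, hs]

end IsExactZeroDivisorPair

section FreeModule

variable {S M N : Type*}

theorem Module.Free.exists_smul_eq_of_smul_eq_zero_s16 [Semiring S] [AddCommMonoid M] [Module S M]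
    [Module.Free S M] {a b : S} (hab : ∀ s : S, a * s = 0 → b ∣ s) {u : M} (hu : a • u = 0) :
    ∃ w : M, b • w = u := by
  let c := Module.Free.chooseBasis S M
  have hcoord : ∀ i, a * c.repr u i = 0 := fun i => by
    simpa [smul_eq_mul] using congrArg (fun z => c.repr z i) hu
  choose q hq using fun i => hab _ (hcoord i)
  refine ⟨∑ i ∈ (c.repr u).support, q i • c i, ?_⟩
  conv_rhs => rw [← c.linearCombination_repr u, Finsupp.linearCombination_apply, Finsupp.sum]
  simp only [Finset.smul_sum, smul_smul, ← hq]

theorem LinearMap.exists_smul_eq_of_smul_apply_eq_zero [CommSemiring S] [AddCommMonoid M]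
    [Module S M] [Module.Free S M] [AddCommMonoid N] [Module S N] [Module.Free S N] {a b : S}
    (hab : ∀ s : S, a * s = 0 → b ∣ s) (h : M →ₗ[S] N) (hh : ∀ v, a • h v = 0) :
    ∃ χ : M →ₗ[S] N, ∀ v, b • χ v = h v := by
  let c := Module.Free.chooseBasis S M
  choose w hw using fun i => Module.Free.exists_smul_eq_of_smul_eq_zero_s16 hab (hh (c i))
  refine ⟨c.constr S w, fun v => ?_⟩
  change (b • c.constr S w) v = h v
  congr 1
  exact c.ext fun i => by simp [Module.Basis.constr_basis, hw i]

end FreeModule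

theorem Submodule.mkQ_span_singleton_smul_top_eq_of_sub_eq_smul {S M : Type*} [CommRing S]
    [AddCommGroup M] [Module S M] {x : S} {a b w : M} (h : a - b = x • w) :
    (Ideal.span {x} • ⊤ : Submodule S M).mkQ a = (Ideal.span {x} • ⊤ : Submodule S M).mkQ b :=
  (Submodule.Quotient.eq _).2 (h ▸ smul_mem_smul (Ideal.mem_span_singleton_self x) mem_top)

section LiftedComplex

variable {S : Type*} [CommRing S] {x y : S} {F : ℤ → Type*} [∀ i, AddCommGroup (F i)]
  [∀ i, Module S (F i)] (d : ∀ i : ℤ, F (i + 1) →ₗ[S] F i) (ψ : ∀ i : ℤ, F (i + 1 + 1) →ₗ[S] F i)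
  (φ : ∀ i : ℤ, F (i + 1 + 1 + 1) →ₗ[S] F i)

theorem smul_d_phi_add_phi_d_eq_zero
    (hψ : ∀ (i : ℤ) (v : F (i + 1 + 1)), x • ψ i v = d i (d (i + 1) v))
    (hφ : ∀ (i : ℤ) (v : F (i + 1 + 1 + 1)),
      d i (ψ (i + 1) v) - ψ i (d (i + 1 + 1) v) = y • φ i v)
    (i : ℤ) (v : F (i + 1 + 1 + 1 + 1)) :
    y • (d i (φ (i + 1) v) + φ i (d (i + 1 + 1 + 1) v)) = 0 := by
  have hdφ := congrArg (d i) (hφ (i + 1) v)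
  have hψd := congrArg (ψ i) (hψ (i + 1 + 1) v)
  simp only [map_sub, map_smul] at hdφ hψd
  linear_combination (norm := module)
    -hdφ - hφ i (d (i + 1 + 1 + 1) v) - hψ i (ψ (i + 1 + 1) v) + hψd

theorem smul_commutator_psi_sub_commutator_d_eq_zero
    (hψ : ∀ (i : ℤ) (v : F (i + 1 + 1)), x • ψ i v = d i (d (i + 1) v))
    (f : ∀ i : ℤ, F (i + 1 + 1 + 1) →ₗ[S] F i) (g : ∀ i : ℤ, F (i + 1 + 1 + 1 + 1) →ₗ[S] F i)
    (hg : ∀ (i : ℤ) (v : F (i + 1 + 1 + 1 + 1)),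
      x • g i v = d i (f (i + 1) v) + f i (d (i + 1 + 1 + 1) v))
    (i : ℤ) (v : F (i + 1 + 1 + 1 + 1 + 1)) :
    x • (ψ i (f (i + 1 + 1) v) - f i (ψ (i + 1 + 1 + 1) v)
      - (d i (g (i + 1) v) - g i (d (i + 1 + 1 + 1 + 1) v))) = 0 := by
  have hdg := congrArg (d i) (hg (i + 1) v)
  have hfψ := congrArg (f i) (hψ (i + 1 + 1 + 1) v)
  simp only [map_add, map_smul] at hdg hfψ
  linear_combination (norm := module)
    hψ i (f (i + 1 + 1) v) - hfψ - hdg + hg i (d (i + 1 + 1 + 1 + 1) v)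

theorem smul_phi_anticommutator_sub_homotopy_eq_zero
    (hψ : ∀ (i : ℤ) (v : F (i + 1 + 1)), x • ψ i v = d i (d (i + 1) v))
    (hφ : ∀ (i : ℤ) (v : F (i + 1 + 1 + 1)),
      d i (ψ (i + 1) v) - ψ i (d (i + 1 + 1) v) = y • φ i v)
    (f : ∀ i : ℤ, F (i + 1 + 1 + 1) →ₗ[S] F i) (g : ∀ i : ℤ, F (i + 1 + 1 + 1 + 1) →ₗ[S] F i)
    (hg : ∀ (i : ℤ) (v : F (i + 1 + 1 + 1 + 1)),
      x • g i v = d i (f (i + 1) v) + f i (d (i + 1 + 1 + 1) v))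
    (σ : ∀ i : ℤ, F (i + 1 + 1 + 1 + 1 + 1) →ₗ[S] F i)
    (hσ : ∀ (i : ℤ) (v : F (i + 1 + 1 + 1 + 1 + 1)),
      y • σ i v = ψ i (f (i + 1 + 1) v) - f i (ψ (i + 1 + 1 + 1) v)
        - (d i (g (i + 1) v) - g i (d (i + 1 + 1 + 1 + 1) v)))
    (i : ℤ) (v : F (i + 1 + 1 + 1 + 1 + 1 + 1)) :
    y • (φ i (f (i + 1 + 1 + 1) v) + f i (φ (i + 1 + 1 + 1) v)
      - (d i (σ (i + 1) v) + σ i (d (i + 1 + 1 + 1 + 1 + 1) v))) = 0 := by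
  have hfφ := congrArg (f i) (hφ (i + 1 + 1 + 1) v)
  have hdσ := congrArg (d i) (hσ (i + 1) v)
  have hψg := congrArg (ψ i) (hg (i + 1 + 1) v)
  have hgψ := congrArg (g i) (hψ (i + 1 + 1 + 1 + 1) v)
  simp only [map_add, map_sub, map_smul] at hfφ hdσ hψg hgψ
  linear_combination (norm := module)
    -hφ i (f (i + 1 + 1 + 1) v) - hfφ - hdσ - hσ i (d (i + 1 + 1 + 1 + 1 + 1) v)
      - hψ i (g (i + 1 + 1) v) + hψg + hgψ - hg i (ψ (i + 1 + 1 + 1 + 1) v)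

variable [∀ i, Module.Free S (F i)]

theorem exists_smul_eq_d_phi_add_phi_d (hxy : IsExactZeroDivisorPair x y)
    (hψ : ∀ (i : ℤ) (v : F (i + 1 + 1)), x • ψ i v = d i (d (i + 1) v))
    (hφ : ∀ (i : ℤ) (v : F (i + 1 + 1 + 1)),
      d i (ψ (i + 1) v) - ψ i (d (i + 1 + 1) v) = y • φ i v) :
    ∃ χ : ∀ i : ℤ, F (i + 1 + 1 + 1 + 1) →ₗ[S] F i, ∀ (i : ℤ) (v : F (i + 1 + 1 + 1 + 1)),
      x • χ i v = d i (φ (i + 1) v) + φ i (d (i + 1 + 1 + 1) v) := by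
  choose χ hχ using fun i => LinearMap.exists_smul_eq_of_smul_apply_eq_zero
    (fun _ => hxy.dvd_of_mul_eq_zero) ((d i).comp (φ (i + 1)) + (φ i).comp (d (i + 1 + 1 + 1)))
    (smul_d_phi_add_phi_d_eq_zero d ψ φ hψ hφ i)
  exact ⟨χ, hχ⟩

theorem phi_anticommutator_nullhomotopic (hxy : IsExactZeroDivisorPair x y)
    (hψ : ∀ (i : ℤ) (v : F (i + 1 + 1)), x • ψ i v = d i (d (i + 1) v))
    (hφ : ∀ (i : ℤ) (v : F (i + 1 + 1 + 1)),
      d i (ψ (i + 1) v) - ψ i (d (i + 1 + 1) v) = y • φ i v)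
    (f : ∀ i : ℤ, F (i + 1 + 1 + 1) →ₗ[S] F i) (g : ∀ i : ℤ, F (i + 1 + 1 + 1 + 1) →ₗ[S] F i)
    (hg : ∀ (i : ℤ) (v : F (i + 1 + 1 + 1 + 1)),
      x • g i v = d i (f (i + 1) v) + f i (d (i + 1 + 1 + 1) v)) :
    ∃ σ : ∀ i : ℤ, F (i + 1 + 1 + 1 + 1 + 1) →ₗ[S] F i,
      ∀ (i : ℤ) (v : F (i + 1 + 1 + 1 + 1 + 1 + 1)),
        (Ideal.span {x} • ⊤ : Submodule S (F i)).mkQ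
            (φ i (f (i + 1 + 1 + 1) v) + f i (φ (i + 1 + 1 + 1) v)) =
          (Ideal.span {x} • ⊤ : Submodule S (F i)).mkQ
            (d i (σ (i + 1) v) + σ i (d (i + 1 + 1 + 1 + 1 + 1) v)) := by
  choose σ hσ using fun i => LinearMap.exists_smul_eq_of_smul_apply_eq_zero
    (fun _ => hxy.symm.dvd_of_mul_eq_zero)
    ((ψ i).comp (f (i + 1 + 1)) - (f i).comp (ψ (i + 1 + 1 + 1))
      - ((d i).comp (g (i + 1)) - (g i).comp (d (i + 1 + 1 + 1 + 1))))
    (smul_commutator_psi_sub_commutator_d_eq_zero d ψ hψ f g hg i)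
  refine ⟨σ, fun i v => ?_⟩
  obtain ⟨w, hw⟩ := Module.Free.exists_smul_eq_of_smul_eq_zero_s16
    (fun _ => hxy.dvd_of_mul_eq_zero)
    (smul_phi_anticommutator_sub_homotopy_eq_zero d ψ φ hψ hφ f g hg σ hσ i v)
  exact Submodule.mkQ_span_singleton_smul_top_eq_of_sub_eq_smul hw.symm

end LiftedComplex

theorem two_phi_sq_nullhomotopic_general {S : Type*} [CommRing S] {x y : S}
    (hxy : IsExactZeroDivisorPair x y)
    (F : ℤ → Type*) [∀ i, AddCommGroup (F i)] [∀ i, Module S (F i)]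
    [∀ i, Module.Free S (F i)]
    (d : ∀ i : ℤ, F (i + 1) →ₗ[S] F i)
    (ψ : ∀ i : ℤ, F (i + 1 + 1) →ₗ[S] F i)
    (hψ : ∀ (i : ℤ) (v : F (i + 1 + 1)), x • ψ i v = d i (d (i + 1) v))
    (φ : ∀ i : ℤ, F (i + 1 + 1 + 1) →ₗ[S] F i)
    (hφ : ∀ (i : ℤ) (v : F (i + 1 + 1 + 1)),
      d i (ψ (i + 1) v) - ψ i (d (i + 1 + 1) v) = y • φ i v) :
    ∃ σ : ∀ i : ℤ, F (i + 1 + 1 + 1 + 1 + 1) →ₗ[S] F i,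
      ∀ (i : ℤ) (v : F (i + 1 + 1 + 1 + 1 + 1 + 1)),
        (Ideal.span {x} • ⊤ : Submodule S (F i)).mkQ
            ((2 : ℤ) • φ i (φ (i + 1 + 1 + 1) v)) =
          (Ideal.span {x} • ⊤ : Submodule S (F i)).mkQ
            (d i (σ (i + 1) v) + σ i (d (i + 1 + 1 + 1 + 1 + 1) v)) := by
  obtain ⟨χ, hχ⟩ := exists_smul_eq_d_phi_add_phi_d d ψ φ hxy hψ hφ
  obtain ⟨σ, hσ⟩ := phi_anticommutator_nullhomotopic d ψ φ hxy hψ hφ φ χ hχ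
  exact ⟨σ, fun i v => two_zsmul (φ i (φ (i + 1 + 1 + 1) v)) ▸ hσ i v⟩

/-- In the setting of the construction, the degree `−3` operator `φ` (the reduction mod `x`
of `φ̃` with `d̃ψ̃ − ψ̃d̃ = y·φ̃`) satisfies: `2φ²` is null-homotopic on the reduced
complex. -/
theorem two_phi_sq_nullhomotopic {S : Type*} [CommRing S] {x y : S}
    (hxy : IsExactZeroDivisorPair x y)
    (F : ℤ → Type*) [∀ i, AddCommGroup (F i)] [∀ i, Module S (F i)]
    [∀ i, Module.Free S (F i)]
    (d : ∀ i : ℤ, F (i + 1) →ₗ[S] F i)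
    (hcomplex : ∀ (i : ℤ) (v : F (i + 1 + 1)),
      (Ideal.span {x} • ⊤ : Submodule S (F i)).mkQ (d i (d (i + 1) v)) = 0)
    (ψ : ∀ i : ℤ, F (i + 1 + 1) →ₗ[S] F i)
    (hψ : ∀ (i : ℤ) (v : F (i + 1 + 1)), x • ψ i v = d i (d (i + 1) v))
    (φ : ∀ i : ℤ, F (i + 1 + 1 + 1) →ₗ[S] F i)
    (hφ : ∀ (i : ℤ) (v : F (i + 1 + 1 + 1)),
      d i (ψ (i + 1) v) - ψ i (d (i + 1 + 1) v) = y • φ i v) :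
    ∃ σ : ∀ i : ℤ, F (i + 1 + 1 + 1 + 1 + 1) →ₗ[S] F i,
      ∀ (i : ℤ) (v : F (i + 1 + 1 + 1 + 1 + 1 + 1)),
        (Ideal.span {x} • ⊤ : Submodule S (F i)).mkQ
            ((2 : ℤ) • φ i (φ (i + 1 + 1 + 1) v)) =
          (Ideal.span {x} • ⊤ : Submodule S (F i)).mkQ
            (d i (σ (i + 1) v) + σ i (d (i + 1 + 1 + 1 + 1 + 1) v)) :=
  two_phi_sq_nullhomotopic_general hxy F d ψ hψ φ hφ
end

section
/- Let S = Q[x,y,z,w,t]/(x⁴, y⁴, w⁴, z⁴, x²y², y²w², z²w², xt, zt, wt), f = x² + y² + z² + w², R = S/(f), and g = x² + y² − z² − w². Then the annihilator of the image of g in R equals the ideal (t, y², z², w²) of R. -/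
set_option synthInstance.maxHeartbeats 1000000
set_option maxHeartbeats 1000000

open MvPolynomial

/-- The ideal `(x⁴, y⁴, w⁴, z⁴, x²y², y²w², z²w², xt, zt, wt)` of `ℚ[x,y,z,w,t]`,
with variables `x=X 0, y=X 1, z=X 2, w=X 3, t=X 4`. -/
noncomputable def WindleIdeal : Ideal (MvPolynomial (Fin 5) ℚ) :=
  Ideal.span {X 0 ^ 4, X 1 ^ 4, X 3 ^ 4, X 2 ^ 4, X 0 ^ 2 * X 1 ^ 2,
    X 1 ^ 2 * X 3 ^ 2, X 2 ^ 2 * X 3 ^ 2, X 0 * X 4, X 2 * X 4, X 3 * X 4}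

/-- `S = ℚ[x,y,z,w,t]/(x⁴, y⁴, w⁴, z⁴, x²y², y²w², z²w², xt, zt, wt)`. -/
noncomputable abbrev WindleRingS : Type :=
  MvPolynomial (Fin 5) ℚ ⧸ WindleIdeal

/-- The image of `f = x² + y² + z² + w²` in `S`. -/
noncomputable def windleF : WindleRingS :=
  Ideal.Quotient.mk WindleIdeal (X 0 ^ 2 + X 1 ^ 2 + X 2 ^ 2 + X 3 ^ 2)

/-- `R = S/(f)` where `f = x² + y² + z² + w²`. -/
noncomputable abbrev WindleRingR : Type :=
  WindleRingS ⧸ (Ideal.span {windleF} : Ideal WindleRingS)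

/-- The image in `R` of a polynomial in `ℚ[x,y,z,w,t]`. -/
noncomputable def windleMk (p : MvPolynomial (Fin 5) ℚ) : WindleRingR :=
  Ideal.Quotient.mk (Ideal.span {windleF}) (Ideal.Quotient.mk WindleIdeal p)

/-!
Let `J` be the kernel of `ℚ[x,y,z,w,t] → R`. Each of `t g`, `y² g`, `z² g`, `w² g` is an explicit
combination of the defining relations and `f`, which gives `⊇`.

For `⊆`, compare the coefficients of `xy³zw` and `xyzw³`. They agree on every element of `J`: no
monomial relation divides either of them, and on `r f` both equal the coefficient of `xyzw` in `r`.
On `r g`, however, they differ by twice the coefficient of `xyzw` in `r`. Taking `r = (xyzw / m) p`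
for a squarefree monomial `m` in `x, y, z, w` shows that `p g ∈ J` kills the coefficient of `m` in
`p`. Hence every monomial of `p` is divisible by one of `x², y², z², w², t`, and
`x² ≡ -(y² + z² + w²)` in `R`.
-/

namespace MvPolynomial

variable {σ R : Type*} [CommSemiring R]

theorem coeff_eq_zero_of_mem_ideal_span_monomial_image {G : Set (σ →₀ ℕ)}
    {p : MvPolynomial σ R} (hp : p ∈ Ideal.span ((fun s => monomial s (1 : R)) '' G))
    {μ : σ →₀ ℕ} (hμ : ∀ g ∈ G, ¬ g ≤ μ) : coeff μ p = 0 := by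
  by_contra h
  obtain ⟨g, hg, hle⟩ := mem_ideal_span_monomial_image.1 hp μ (mem_support_iff.2 h)
  exact hμ g hg hle

theorem coeff_add_single_mul_X_pow [DecidableEq σ] {u : σ →₀ ℕ} {i : σ} {n : ℕ} (hu : u i < n)
    (j : σ) (r : MvPolynomial σ R) :
    coeff (u + Finsupp.single j n) (r * X i ^ n) = if i = j then coeff u r else 0 := by
  rw [X_pow_eq_monomial]
  split_ifs with hij
  · rw [hij, coeff_mul_monomial, mul_one]
  · rw [coeff_mul_monomial', if_neg]
    rw [Finsupp.single_le_iff, Finsupp.add_apply, Finsupp.single_eq_of_ne hij]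
    omega

end MvPolynomial

namespace Windle

noncomputable def windleMkHom : MvPolynomial (Fin 5) ℚ →+* WindleRingR :=
  (Ideal.Quotient.mk _).comp (Ideal.Quotient.mk WindleIdeal)

theorem coe_windleMkHom : ⇑windleMkHom = windleMk := rfl

theorem windleMkHom_surjective : Function.Surjective windleMkHom :=
  Ideal.Quotient.mk_surjective.comp Ideal.Quotient.mk_surjective

theorem ker_windleMkHom : RingHom.ker windleMkHom =
    Ideal.span {X 0 ^ 2 + X 1 ^ 2 + X 2 ^ 2 + X 3 ^ 2} ⊔ WindleIdeal := by
  ext p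
  have hf : (Ideal.span {windleF} : Ideal WindleRingS) =
      (Ideal.span {X 0 ^ 2 + X 1 ^ 2 + X 2 ^ 2 + X 3 ^ 2}).map (Ideal.Quotient.mk WindleIdeal) := by
    rw [Ideal.map_span, Set.image_singleton]
    rfl
  rw [RingHom.mem_ker, windleMkHom, RingHom.comp_apply, Ideal.Quotient.eq_zero_iff_mem, hf,
    Ideal.mem_quotient_iff_mem_sup]

def windleExponents : Set (Fin 5 →₀ ℕ) :=
  {Finsupp.single 0 4, Finsupp.single 1 4, Finsupp.single 3 4, Finsupp.single 2 4,
    Finsupp.single 0 2 + Finsupp.single 1 2, Finsupp.single 1 2 + Finsupp.single 3 2,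
    Finsupp.single 2 2 + Finsupp.single 3 2, Finsupp.single 0 1 + Finsupp.single 4 1,
    Finsupp.single 2 1 + Finsupp.single 4 1, Finsupp.single 3 1 + Finsupp.single 4 1}

theorem windleIdeal_eq_span_monomial :
    WindleIdeal = Ideal.span ((fun s => monomial s (1 : ℚ)) '' windleExponents) := by
  simp only [WindleIdeal, windleExponents, Set.image_insert_eq, Set.image_singleton,
    X_pow_eq_monomial]
  simp only [X, monomial_mul, one_mul]

noncomputable def xyzw : Fin 5 →₀ ℕ :=
  Finsupp.single 0 1 + Finsupp.single 1 1 + Finsupp.single 2 1 + Finsupp.single 3 1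

theorem xyzw_lt_two (i : Fin 5) : xyzw i < 2 := by
  fin_cases i <;> simp [xyzw]

theorem not_le_of_mem_windleExponents {v : Fin 5 →₀ ℕ} (hv : v ∈ windleExponents) {j : Fin 5}
    (hj : j = 1 ∨ j = 3) : ¬ v ≤ xyzw + Finsupp.single j 2 := by
  simp only [windleExponents, Set.mem_insert_iff, Set.mem_singleton_iff] at hv
  rw [Finsupp.le_def, Fin.forall_fin_succ]
  rcases hj with rfl | rfl <;>
    rcases hv with rfl | rfl | rfl | rfl | rfl | rfl | rfl | rfl | rfl | rfl <;>
    simp [xyzw, Finsupp.single_apply, Fin.forall_fin_succ]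

theorem coeff_xyzw_add_single_mul_f (r : MvPolynomial (Fin 5) ℚ) {j : Fin 5} (hj : j = 1 ∨ j = 3) :
    coeff (xyzw + Finsupp.single j 2) (r * (X 0 ^ 2 + X 1 ^ 2 + X 2 ^ 2 + X 3 ^ 2)) =
      coeff xyzw r := by
  simp only [mul_add, coeff_add, coeff_add_single_mul_X_pow (xyzw_lt_two _)]
  rcases hj with rfl | rfl <;> simp

theorem coeff_sub_coeff_mul_g (r : MvPolynomial (Fin 5) ℚ) :
    coeff (xyzw + Finsupp.single 1 2) (r * (X 0 ^ 2 + X 1 ^ 2 - X 2 ^ 2 - X 3 ^ 2)) -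
      coeff (xyzw + Finsupp.single 3 2) (r * (X 0 ^ 2 + X 1 ^ 2 - X 2 ^ 2 - X 3 ^ 2)) =
        2 * coeff xyzw r := by
  simp only [mul_add, mul_sub, coeff_add, coeff_sub, coeff_add_single_mul_X_pow (xyzw_lt_two _)]
  simp only [↓reduceIte, Fin.reduceEq, sub_zero]
  ring

theorem coeff_eq_of_mem_ker {q : MvPolynomial (Fin 5) ℚ} (hq : q ∈ RingHom.ker windleMkHom) :
    coeff (xyzw + Finsupp.single 1 2) q = coeff (xyzw + Finsupp.single 3 2) q := by
  rw [ker_windleMkHom] at hq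
  obtain ⟨a, ha, b, hb, rfl⟩ := Submodule.mem_sup.1 hq
  obtain ⟨c, rfl⟩ := Ideal.mem_span_singleton'.1 ha
  rw [windleIdeal_eq_span_monomial] at hb
  have hb0 {j : Fin 5} (hj : j = 1 ∨ j = 3) : coeff (xyzw + Finsupp.single j 2) b = 0 :=
    coeff_eq_zero_of_mem_ideal_span_monomial_image hb
      fun v hv => not_le_of_mem_windleExponents hv hj
  rw [coeff_add, coeff_add, hb0 (Or.inl rfl), hb0 (Or.inr rfl),
    coeff_xyzw_add_single_mul_f c (Or.inl rfl), coeff_xyzw_add_single_mul_f c (Or.inr rfl)]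

theorem coeff_eq_zero_of_mul_mem_ker {p : MvPolynomial (Fin 5) ℚ}
    (hp : p * (X 0 ^ 2 + X 1 ^ 2 - X 2 ^ 2 - X 3 ^ 2) ∈ RingHom.ker windleMkHom)
    {s : Fin 5 →₀ ℕ} (hs : s ≤ xyzw) : coeff s p = 0 := by
  set r := monomial (xyzw - s) 1 * p
  have hr : r * (X 0 ^ 2 + X 1 ^ 2 - X 2 ^ 2 - X 3 ^ 2) ∈ RingHom.ker windleMkHom := by
    rw [mul_assoc]
    exact Ideal.mul_mem_left _ _ hp
  have hcoeff : coeff xyzw r = coeff s p := by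
    rw [coeff_monomial_mul', if_pos tsub_le_self, tsub_tsub_cancel_of_le hs, one_mul]
  have h := coeff_sub_coeff_mul_g r
  rw [coeff_eq_of_mem_ker hr, sub_self, hcoeff] at h
  linarith

def sqExponents : Set (Fin 5 →₀ ℕ) :=
  {Finsupp.single 0 2, Finsupp.single 1 2, Finsupp.single 2 2, Finsupp.single 3 2,
    Finsupp.single 4 1}

noncomputable def sqIdeal : Ideal (MvPolynomial (Fin 5) ℚ) :=
  Ideal.span ((fun s => monomial s (1 : ℚ)) '' sqExponents)

theorem le_xyzw_of_forall_not_le {s : Fin 5 →₀ ℕ} (h : ∀ v ∈ sqExponents, ¬ v ≤ s) :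
    s ≤ xyzw := by
  simp only [sqExponents, Set.mem_insert_iff, Set.mem_singleton_iff, forall_eq_or_imp,
    forall_eq, Finsupp.single_le_iff, not_le] at h
  intro i
  fin_cases i <;> simp [xyzw] <;> omega

theorem mem_sqIdeal_of_mul_mem_ker {p : MvPolynomial (Fin 5) ℚ}
    (hp : p * (X 0 ^ 2 + X 1 ^ 2 - X 2 ^ 2 - X 3 ^ 2) ∈ RingHom.ker windleMkHom) :
    p ∈ sqIdeal := by
  refine mem_ideal_span_monomial_image.2 fun s hs => ?_
  by_contra! h
  exact mem_support_iff.1 hs (coeff_eq_zero_of_mul_mem_ker hp (le_xyzw_of_forall_not_le h))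

theorem windleMkHom_f : windleMkHom (X 0 ^ 2 + X 1 ^ 2 + X 2 ^ 2 + X 3 ^ 2) = 0 :=
  RingHom.mem_ker.1 (ker_windleMkHom ▸ Ideal.mem_sup_left (Ideal.mem_span_singleton_self _))

theorem map_sqIdeal_le : sqIdeal.map windleMkHom ≤ Ideal.span {windleMk (X 4),
    windleMk (X 1 ^ 2), windleMk (X 2 ^ 2), windleMk (X 3 ^ 2)} := by
  rw [Ideal.map_le_iff_le_comap, sqIdeal, Ideal.span_le]
  rintro _ ⟨v, hv, rfl⟩
  simp only [sqExponents, Set.mem_insert_iff, Set.mem_singleton_iff] at hv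
  rcases hv with rfl | rfl | rfl | rfl | rfl <;>
    simp only [SetLike.mem_coe, Ideal.mem_comap, ← X_pow_eq_monomial, pow_one, coe_windleMkHom]
  · have hf := windleMkHom_f
    simp only [map_add, coe_windleMkHom] at hf
    rw [show windleMk (X 0 ^ 2) =
        -(windleMk (X 1 ^ 2) + windleMk (X 2 ^ 2) + windleMk (X 3 ^ 2)) by linear_combination hf]
    exact neg_mem (add_mem (add_mem (Ideal.subset_span (by simp)) (Ideal.subset_span (by simp)))
      (Ideal.subset_span (by simp)))
  all_goals exact Ideal.subset_span (by simp)

theorem mul_windleMk_g_eq_zero : ∀ r ∈ ({windleMk (X 4), windleMk (X 1 ^ 2),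
    windleMk (X 2 ^ 2), windleMk (X 3 ^ 2)} : Set WindleRingR),
      r * windleMk (X 0 ^ 2 + X 1 ^ 2 - X 2 ^ 2 - X 3 ^ 2) = 0 := by
  have hW := Ideal.span_le.1
    (le_sup_right.trans_eq ker_windleMkHom.symm : WindleIdeal ≤ RingHom.ker windleMkHom)
  have hf := windleMkHom_f
  simp only [Set.insert_subset_iff, Set.singleton_subset_iff, SetLike.mem_coe, RingHom.mem_ker,
    map_mul, map_pow, map_add] at hW hf
  obtain ⟨hx4, hy4, hw4, hz4, hxy, hyw, hzw, hxt, hzt, hwt⟩ := hW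
  simp only [← coe_windleMkHom, map_add, map_sub, map_pow, Set.mem_insert_iff,
    Set.mem_singleton_iff, forall_eq_or_imp, forall_eq]
  refine ⟨?_, ?_, ?_, ?_⟩
  · linear_combination windleMkHom (X 4) * hf - 2 * windleMkHom (X 2) * hzt -
      2 * windleMkHom (X 3) * hwt
  · linear_combination -windleMkHom (X 1) ^ 2 * hf + 2 * hxy + 2 * hy4
  · linear_combination windleMkHom (X 2) ^ 2 * hf - 2 * hz4 - 2 * hzw
  · linear_combination windleMkHom (X 3) ^ 2 * hf - 2 * hzw - 2 * hw4

end Windle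

open Windle in
/-- In `R = S/(x² + y² + z² + w²)`, the annihilator of the image of
`g = x² + y² − z² − w²` equals the ideal `(t, y², z², w²)`. -/
theorem windle_annihilator_g :
    (Ideal.span {windleMk (X 0 ^ 2 + X 1 ^ 2 - X 2 ^ 2 - X 3 ^ 2)} :
        Ideal WindleRingR).annihilator =
      Ideal.span {windleMk (X 4), windleMk (X 1 ^ 2), windleMk (X 2 ^ 2),
        windleMk (X 3 ^ 2)} := by
  set g : MvPolynomial (Fin 5) ℚ := X 0 ^ 2 + X 1 ^ 2 - X 2 ^ 2 - X 3 ^ 2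
  refine le_antisymm (fun r hr => ?_) (Ideal.span_le.2 fun r hr => ?_)
  · obtain ⟨p, rfl⟩ := windleMkHom_surjective r
    have hpg := (Submodule.mem_annihilator_span_singleton (windleMk g) (windleMkHom p)).1 hr
    rw [smul_eq_mul, ← coe_windleMkHom, ← map_mul] at hpg
    exact map_sqIdeal_le (Ideal.mem_map_of_mem _ (mem_sqIdeal_of_mul_mem_ker hpg))
  · rw [SetLike.mem_coe, Submodule.mem_annihilator_span_singleton (windleMk g) r, smul_eq_mul]
    exact mul_windleMk_g_eq_zero r hr
end
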